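/- arXiv:math/0505323 — 4 statements merged into one kernel-verified Lean document; each statement's English description precedes it below -/
import Mathlib

section
/- Let R ⊆ S be a birational extension of reduced commutative Noetherian rings, i.e., S is a subring of the total quotient ring K of R containing R and finitely generated as an R-module. If C and D are finitely generated torsion-free S-modules, then every R-linear homomorphism C → D is S-linear; that is, Hom_R(C,D) = Hom_S(C,D). -/
set_option synthInstance.maxHeartbeats 1000000
set_option maxHeartbeats 1000000

universe u

/-- A module is torsion-free if nonzerodivisors of the base ring act injectively;
equivalently (for the kernel of localization), the natural map `M → M ⊗ K` to the
extension by the total quotient ring is injective. -/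
def TorsionFree (A : Type u) [CommRing A] (M : Type u) [AddCommGroup M] [Module A M] : Prop :=
  ∀ a ∈ nonZeroDivisors A, ∀ m : M, a • m = 0 → m = 0

/-- Let `R ⊆ S` be a birational extension of reduced Noetherian rings
(`S` a subring of the total quotient ring `K = FractionRing R` containing `R`, finitely
generated as an `R`-module).  If `C` and `D` are finitely generated torsion-free
`S`-modules, then every `R`-linear map `C → D` is `S`-linear. -/
theorem endo_hom_eq_of_birational
    (R : Type u) [CommRing R] [IsNoetherianRing R] [IsReduced R]
    (S : Subalgebra R (FractionRing R)) (hSfg : Module.Finite R S)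
    (C D : Type u) [AddCommGroup C] [Module R C] [Module S C] [IsScalarTower R S C]
    [AddCommGroup D] [Module R D] [Module S D] [IsScalarTower R S D]
    (hC : Module.Finite S C) (hD : Module.Finite S D)
    (hCt : TorsionFree S C) (hDt : TorsionFree S D)
    (f : C →ₗ[R] D) (s : S) (c : C) :
    f (s • c) = s • f c := by
  obtain ⟨⟨r, t⟩, ht⟩ := IsLocalization.surj (nonZeroDivisors R) (s : FractionRing R)
  have hS : s * algebraMap R S (t : R) = algebraMap R S r := by
    apply Subtype.ext
    simpa using ht
  have htS : algebraMap R S (t : R) ∈ nonZeroDivisors S := by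
    rw [mem_nonZeroDivisors_iff_right]
    intro x hx
    have hu : IsUnit (algebraMap R (FractionRing R) (t : R)) :=
      IsLocalization.map_units (FractionRing R) t
    have hK : (x : FractionRing R) * algebraMap R (FractionRing R) (t : R) = 0 := by
      have := congrArg Subtype.val hx
      simpa using this
    have : (x : FractionRing R) = 0 := by
      obtain ⟨u, hu⟩ := hu
      have := congrArg (· * (↑u⁻¹ : FractionRing R)) hK
      simpa [← hu, mul_assoc] using this
    exact Subtype.ext this
  have key : algebraMap R S (t : R) • (f (s • c) - s • f c) = 0 := by
    rw [smul_sub]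
    have h1 : algebraMap R S (t : R) • f (s • c) = algebraMap R S r • f c := by
      rw [algebraMap_smul, ← map_smul f, ← algebraMap_smul S (t : R) (s • c),
        smul_smul, mul_comm, hS, algebraMap_smul, map_smul f, algebraMap_smul]
    have h2 : algebraMap R S (t : R) • (s • f c) = algebraMap R S r • f c := by
      rw [smul_smul, mul_comm, hS]
    rw [h1, h2, sub_self]
  have := hDt _ htS _ key
  exact sub_eq_zero.mp this
end

section
/- Let R ⊆ S be a birational extension of reduced commutative Noetherian rings, let C be a finitely generated torsion-free S-module, let M be a finitely generated torsion-free R-module, and let f : C → M be an R-linear map. Then the image of f is an S-submodule of M ⊗_R K, where K is the total quotient ring of R. -/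
universe u

theorem LinearMap.map_smul_subalgebra_of_isLocalization {R K C N : Type*} [CommRing R]
    [CommRing K] [Algebra R K] (W : Submonoid R) [IsLocalization W K] (S : Subalgebra R K)
    [AddCommGroup C] [Module R C] [Module S C] [IsScalarTower R S C]
    [AddCommGroup N] [Module R N] [Module K N] [IsScalarTower R K N]
    (g : C →ₗ[R] N) (s : S) (c : C) :
    g (s • c) = (s : K) • g c := by
  obtain ⟨⟨r, b⟩, hrb⟩ := IsLocalization.surj W (s : K)
  have hbs : (b : R) • s = algebraMap R S r :=
    Subtype.ext (by simpa [Algebra.smul_def, mul_comm] using hrb)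
  apply (IsLocalization.map_units K b).smul_left_cancel.mp
  calc algebraMap R K b • g (s • c) = g ((b : R) • s • c) := by
        rw [algebraMap_smul, g.map_smul]
    _ = r • g c := by rw [← smul_assoc, hbs, algebraMap_smul, g.map_smul]
    _ = algebraMap R K b • (s : K) • g c := by
        rw [← algebraMap_smul K r, smul_smul, mul_comm, hrb]

theorem image_is_S_module_of_birational_general
    (R : Type u) [CommRing R]
    (S : Subalgebra R (FractionRing R))
    (C : Type u) [AddCommGroup C] [Module R C] [Module S C] [IsScalarTower R S C]
    (M : Type u) [AddCommGroup M] [Module R M]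
    (f : C →ₗ[R] M) (s : S) (c : C) :
    ∃ c' : C,
      (s : FractionRing R) • (TensorProduct.mk R (FractionRing R) M 1 (f c)) =
        TensorProduct.mk R (FractionRing R) M 1 (f c') :=
  ⟨s • c, (((TensorProduct.mk R (FractionRing R) M 1).comp f).map_smul_subalgebra_of_isLocalization
    (nonZeroDivisors R) S s c).symm⟩

/-- Let `R ⊆ S` be a birational extension of reduced Noetherian rings,
`C` a finitely generated torsion-free `S`-module, `M` a finitely generated torsion-free
`R`-module and `f : C → M` an `R`-linear map.  Then the image of `f`, viewed inside
`K ⊗_R M` via the natural (injective) map `M → K ⊗_R M`, is stable under multiplication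
by elements of `S`; i.e. it is an `S`-submodule of `M ⊗_R K`. -/
theorem image_is_S_module_of_birational
    (R : Type u) [CommRing R] [IsNoetherianRing R] [IsReduced R]
    (S : Subalgebra R (FractionRing R)) (hSfg : Module.Finite R S)
    (C : Type u) [AddCommGroup C] [Module R C] [Module S C] [IsScalarTower R S C]
    (hC : Module.Finite S C) (hCt : TorsionFree S C)
    (M : Type u) [AddCommGroup M] [Module R M]
    (hM : Module.Finite R M) (hMt : TorsionFree R M)
    (f : C →ₗ[R] M) (s : S) (c : C) :
    ∃ c' : C,
      (s : FractionRing R) • (TensorProduct.mk R (FractionRing R) M 1 (f c)) =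
        TensorProduct.mk R (FractionRing R) M 1 (f c') :=
  image_is_S_module_of_birational_general R S C M f s c
end

section
/- Let (R, m) be a one-dimensional reduced Noetherian local ring that is not a discrete valuation ring (equivalently, not equal to its integral closure in its total quotient ring), and assume m contains a nonzerodivisor. Then R is strictly contained in the image of End_R(m) in the total quotient ring K; that is, there exists an R-linear endomorphism of m which is not multiplication by an element of R. -/
set_option synthInstance.maxHeartbeats 1000000
set_option maxHeartbeats 1000000

universe u

open IsLocalRing

/-- In a reduced ring, a nonzerodivisor lies in no minimal prime. -/
lemma aux_nzd_notMem_minimalPrime {R : Type u} [CommRing R] [IsReduced R] {q : Ideal R}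
    (hq : q ∈ minimalPrimes R) {r : R} (hr : r ∈ nonZeroDivisors R) : r ∉ q := by
  haveI : q.IsPrime := hq.1.1
  intro hrq
  have hmem : algebraMap R (Localization q.primeCompl) r ∈
      IsLocalRing.maximalIdeal (Localization q.primeCompl) := by
    rw [← Localization.AtPrime.comap_maximalIdeal (I := q)] at hrq
    exact hrq
  have hnil : IsNilpotent (algebraMap R (Localization q.primeCompl) r) :=
    (notMem_nonZeroDivisors_of_mem_mem_minimalPrimes hrq hq hr).elim
  have hz : algebraMap R (Localization q.primeCompl) r = 0 := hnil.eq_zero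
  obtain ⟨m, hm⟩ := (IsLocalization.map_eq_zero_iff q.primeCompl
    (Localization q.primeCompl) r).mp hz
  have : (m : R) = 0 := mem_nonZeroDivisors_iff_right.mp hr _ hm
  exact m.2 (this ▸ q.zero_mem)

/-- Under the hypotheses of the theorem, the maximal ideal cannot be principal. -/
lemma aux_not_principal {R : Type u} [CommRing R] [IsLocalRing R] [IsNoetherianRing R]
    [IsReduced R]
    (hnzd : ∃ r ∈ maximalIdeal R, r ∈ nonZeroDivisors R)
    (hnic : ¬ IsIntegrallyClosed R)
    (hp : (maximalIdeal R).IsPrincipal) : False := by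
  obtain ⟨r, hrm, hr⟩ := hnzd
  obtain ⟨t, ht⟩ := hp
  rw [Ideal.submodule_span_eq] at ht
  -- t is a nonzerodivisor
  have hrt : r ∈ Ideal.span {t} := by rw [← ht]; exact hrm
  obtain ⟨c, hc⟩ := Ideal.mem_span_singleton'.mp hrt
  have htnzd : t ∈ nonZeroDivisors R := by
    rw [mem_nonZeroDivisors_iff_right]
    intro x hx
    apply mem_nonZeroDivisors_iff_right.mp hr
    rw [← hc, show x * (c * t) = c * (x * t) by ring, hx, mul_zero]
  -- R is a domain
  have hmne : maximalIdeal R ≠ ⊤ := Ideal.IsPrime.ne_top inferInstance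
  have hKrull : (⨅ n : ℕ, maximalIdeal R ^ n) = ⊥ :=
    Ideal.iInf_pow_eq_bot_of_isLocalRing _ hmne
  have hpow : ∀ a : R, a ≠ 0 → ∃ k : ℕ, ∃ u : R, IsUnit u ∧ a = u * t ^ k := by
    intro a ha
    have : a ∉ (⨅ n : ℕ, maximalIdeal R ^ n) := by
      rw [hKrull]; exact ha
    rw [Submodule.mem_iInf] at this
    push_neg at this
    obtain ⟨n, hn⟩ := this
    -- least n such that a ∉ m^n
    have h0 : a ∈ maximalIdeal R ^ 0 := by simp
    -- find k with a ∈ m^k, a ∉ m^(k+1)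
    have : ∃ k, a ∈ maximalIdeal R ^ k ∧ a ∉ maximalIdeal R ^ (k + 1) := by
      by_contra hcon
      push_neg at hcon
      have : ∀ k, a ∈ maximalIdeal R ^ k := by
        intro k
        induction k with
        | zero => exact h0
        | succ k ih => exact hcon k ih
      exact hn (this n)
    obtain ⟨k, hk1, hk2⟩ := this
    have hspan : maximalIdeal R ^ k = Ideal.span {t ^ k} := by
      rw [ht, Ideal.span_singleton_pow]
    rw [hspan] at hk1
    obtain ⟨u, hu⟩ := Ideal.mem_span_singleton'.mp hk1
    refine ⟨k, u, ?_, hu.symm⟩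
    by_contra huu
    have hum : u ∈ maximalIdeal R := by
      rwa [IsLocalRing.mem_maximalIdeal, mem_nonunits_iff]
    rw [ht] at hum
    obtain ⟨d, hd⟩ := Ideal.mem_span_singleton'.mp hum
    apply hk2
    have : maximalIdeal R ^ (k + 1) = Ideal.span {t ^ (k + 1)} := by
      rw [ht, Ideal.span_singleton_pow]
    rw [this]
    refine Ideal.mem_span_singleton'.mpr ⟨d, ?_⟩
    rw [← hu, ← hd]; ring
  haveI : NoZeroDivisors R := by
    constructor
    intro a b hab
    by_contra hcon
    push_neg at hcon
    obtain ⟨ha, hb⟩ := hcon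
    obtain ⟨k, u, hu, hau⟩ := hpow a ha
    obtain ⟨l, v, hv, hbv⟩ := hpow b hb
    have : (u * v) * t ^ (k + l) = 0 := by
      rw [pow_add]; rw [hau, hbv] at hab; rw [← hab]; ring
    have htk : t ^ (k + l) ∈ nonZeroDivisors R := pow_mem htnzd (k + l)
    have huv : u * v = 0 := mem_nonZeroDivisors_iff_right.mp htk _ this
    have : IsUnit (0 : R) := huv ▸ hu.mul hv
    rw [isUnit_zero_iff] at this
    exact zero_ne_one this
  haveI : IsDomain R := NoZeroDivisors.to_isDomain R
  have htfae := (tfae_of_isNoetherianRing_of_isLocalRing_of_isDomain R).out 4 3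
  have hprin : (maximalIdeal R).IsPrincipal := ⟨⟨t, ht⟩⟩
  exact hnic (htfae.mp hprin).1

set_option maxHeartbeats 1000000 in
/-- Let `(R, m)` be a one-dimensional reduced Noetherian local ring which
is not integrally closed in its total quotient ring (i.e. not a discrete valuation ring),
and assume `m` contains a nonzerodivisor.  Then `R ⊊ End_R(m)`: there exists an `R`-linear
endomorphism of `m` which is not multiplication by any element of `R`. -/
theorem exists_nonscalar_end_of_not_integrallyClosed
    (R : Type u) [CommRing R] [IsLocalRing R] [IsNoetherianRing R] [IsReduced R]
    (hdim : ringKrullDim R = 1)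
    (hnzd : ∃ r ∈ maximalIdeal R, r ∈ nonZeroDivisors R)
    (hnic : ¬ IsIntegrallyClosed R) :
    ∃ f : Module.End R (maximalIdeal R), ∀ c : R,
      f ≠ c • (LinearMap.id : maximalIdeal R →ₗ[R] maximalIdeal R) := by
  classical
  obtain ⟨r, hrm, hrnzd⟩ := hnzd
  by_cases hprinc : (maximalIdeal R).IsPrincipal
  · exact (aux_not_principal ⟨r, hrm, hrnzd⟩ hnic hprinc).elim
  -- every prime containing r is the maximal ideal
  have hprime : ∀ p : Ideal R, p.IsPrime → r ∈ p → p = maximalIdeal R := by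
    intro p hp hrp
    by_contra hne
    have hpm : p < maximalIdeal R :=
      lt_of_le_of_ne (IsLocalRing.le_maximalIdeal hp.ne_top) hne
    obtain ⟨q, hqmin, hqp⟩ := Ideal.exists_minimalPrimes_le (bot_le : (⊥ : Ideal R) ≤ p)
    haveI hqprime : q.IsPrime := hqmin.1.1
    have hqmin' : q ∈ minimalPrimes R := hqmin
    have hrq : r ∉ q := aux_nzd_notMem_minimalPrime hqmin' hrnzd
    have hqplt : q < p := lt_of_le_of_ne hqp (fun h => hrq (h ▸ hrp))
    -- build a chain of length 2 in the prime spectrum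
    let x0 : PrimeSpectrum R := ⟨q, hqprime⟩
    let x1 : PrimeSpectrum R := ⟨p, hp⟩
    let x2 : PrimeSpectrum R := ⟨maximalIdeal R, (IsLocalRing.maximalIdeal.isMaximal R).isPrime⟩
    have h01 : x0 < x1 := hqplt
    have h12 : x1 < x2 := hpm
    let c : LTSeries (PrimeSpectrum R) :=
      ((RelSeries.singleton _ x2).cons x1 h12).cons x0 (by exact h01)
    have hlen : (c.length : WithBot (WithTop ℕ)) ≤ ringKrullDim R :=
      Order.LTSeries.length_le_krullDim c
    rw [hdim] at hlen
    have : c.length = 2 := rfl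
    rw [this] at hlen
    norm_num at hlen
    exact absurd hlen (by norm_cast)
  -- the maximal ideal is contained in the radical of (r)
  have hrad : maximalIdeal R ≤ (Ideal.span {r}).radical := by
    rw [Ideal.radical_eq_sInf]
    refine le_sInf ?_
    rintro J ⟨hJl, hJp⟩
    have : J = maximalIdeal R := hprime J hJp (hJl (Ideal.mem_span_singleton_self r))
    exact this ▸ le_rfl
  have hP : ∃ n, maximalIdeal R ^ n ≤ Ideal.span {r} :=
    Ideal.exists_pow_le_of_le_radical_of_fg hrad (IsNoetherian.noetherian _)
  set n0 := Nat.find hP with hn0def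
  have hn0 : maximalIdeal R ^ n0 ≤ Ideal.span {r} := Nat.find_spec hP
  have hmnotle : ¬ maximalIdeal R ≤ Ideal.span {r} := by
    intro hle
    apply hprinc
    have heq : maximalIdeal R = Ideal.span {r} :=
      le_antisymm hle (by rwa [Ideal.span_le, Set.singleton_subset_iff])
    exact ⟨⟨r, by rw [heq, Ideal.submodule_span_eq]⟩⟩
  have hne0 : n0 ≠ 0 := by
    intro h
    apply hmnotle
    have h2 := hn0
    rw [h, pow_zero, Ideal.one_eq_top] at h2
    exact le_trans le_top h2
  have hne1 : n0 ≠ 1 := by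
    intro h
    apply hmnotle
    have h2 := hn0
    rw [h, pow_one] at h2
    exact h2
  have hlt : ¬ maximalIdeal R ^ (n0 - 1) ≤ Ideal.span {r} :=
    Nat.find_min hP (by omega)
  obtain ⟨s, hs1, hs2⟩ := SetLike.not_le_iff_exists.mp hlt
  have hsm : s ∈ maximalIdeal R := by
    have : maximalIdeal R ^ (n0 - 1) ≤ maximalIdeal R ^ 1 :=
      Ideal.pow_le_pow_right (by omega)
    rw [pow_one] at this
    exact this hs1
  -- division by r
  have hdvd : ∀ a : maximalIdeal R, ∃ c : R, s * (a : R) = r * c := by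
    intro a
    have h1 : s * (a : R) ∈ maximalIdeal R ^ (n0 - 1) * maximalIdeal R :=
      Ideal.mul_mem_mul hs1 a.2
    rw [← pow_succ, show n0 - 1 + 1 = n0 by omega] at h1
    have := hn0 h1
    rwa [Ideal.mem_span_singleton] at this
  choose g hg using hdvd
  have hcan : ∀ x y : R, r * x = r * y → x = y := by
    intro x y h
    have hz : (x - y) * r = 0 := by linear_combination h
    exact sub_eq_zero.mp (mem_nonZeroDivisors_iff_right.mp hrnzd (x - y) hz)
  by_cases hcase : ∀ a : maximalIdeal R, g a ∈ maximalIdeal R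
  · -- multiplication by s/r is an endomorphism of m, not a scalar
    refine ⟨{ toFun := fun a => ⟨g a, hcase a⟩,
              map_add' := ?_, map_smul' := ?_ }, ?_⟩
    · intro a b
      ext
      show g (a + b) = g a + g b
      apply hcan
      have e1 := hg (a + b); have e2 := hg a; have e3 := hg b
      push_cast at e1
      linear_combination -e1 + e2 + e3
    · intro x a
      ext
      show g (x • a) = x * g a
      apply hcan
      have e1 := hg (x • a); have e2 := hg a
      push_cast at e1
      simp only [smul_eq_mul] at e1
      linear_combination -e1 + x * e2
    · intro c hc
      have h1 := congrArg (fun f : Module.End R (maximalIdeal R) =>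
        ((f ⟨r, hrm⟩ : maximalIdeal R) : R)) hc
      simp only [LinearMap.smul_apply, LinearMap.id_apply, SetLike.val_smul,
        smul_eq_mul] at h1
      have h2 : g ⟨r, hrm⟩ = c * r := h1
      have hgr : g ⟨r, hrm⟩ = s := by
        apply hcan
        have e1 := hg ⟨r, hrm⟩
        linear_combination -e1
      apply hs2
      rw [Ideal.mem_span_singleton]
      exact ⟨c, by rw [← hgr, h2]; ring⟩
  · -- otherwise the maximal ideal is principal, contradiction
    exfalso
    push_neg at hcase
    obtain ⟨t, hgt⟩ := hcase
    have hu : IsUnit (g t) := by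
      by_contra h
      exact hgt (IsLocalRing.mem_maximalIdeal (g t) |>.mpr h)
    obtain ⟨v, hv⟩ := hu.exists_left_inv
    have hle : maximalIdeal R ≤ Ideal.span {(t : R)} := by
      intro a ha
      rw [Ideal.mem_span_singleton]
      refine ⟨v * g ⟨a, ha⟩, ?_⟩
      have e1 := hg ⟨a, ha⟩
      have e2 := hg t
      have key : g ⟨a, ha⟩ * (t : R) = g t * a := by
        apply hcan
        linear_combination a * e2 - (t : R) * e1
      linear_combination (-a) * hv - v * key
    have hge : Ideal.span {(t : R)} ≤ maximalIdeal R := by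
      rw [Ideal.span_le, Set.singleton_subset_iff]
      exact t.2
    have heq : maximalIdeal R = Ideal.span {(t : R)} := le_antisymm hle hge
    exact hprinc ⟨⟨(t : R), heq.trans (Ideal.submodule_span_eq).symm⟩⟩
end

section
/- Let (R, m) be a one-dimensional reduced complete local ring, N a finitely generated torsion-free R-module, and N' = Hom_R(R^{(1)}, N) ⊆ N where R^{(1)} = End_R(m) is viewed as a subring of the total quotient ring. Then N' is the largest R^{(1)}-submodule of N: it is an R^{(1)}-module, and for every finitely generated torsion-free R^{(1)}-module X and every R-linear map f : X → N, the image of f is contained in N'. -/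
/-!
Every element of `S ⊆ K` is a fraction `a / d` with `d` a nonzerodivisor, so `d • s = a` in `S`.
For an `R`-linear `f : X → N` out of an `S`-module this gives `d • f (s • v) = f (a • v) = a • f v`,
and since `d` is invertible in `K` this says `s • (1 ⊗ f v) = 1 ⊗ f (s • v)` in `K ⊗ N`: the
`S`-multiples of `f v` all lie in `N`.
-/

set_option synthInstance.maxHeartbeats 1000000
set_option maxHeartbeats 1000000

universe u

open IsLocalRing

/-- For a subring `S` of the total quotient ring `K`, the predicate on `x ∈ N` that all
`S`-multiples of `x` (computed inside `K ⊗_R N`) remain inside `N`.  The set of such `x`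
is the image of the natural inclusion `Hom_R(S, N) ⊆ N`. -/
def StableUnder (R : Type u) [CommRing R] (S : Subalgebra R (FractionRing R))
    (N : Type u) [AddCommGroup N] [Module R N] (x : N) : Prop :=
  ∀ s : S, ∃ y : N,
    (s : FractionRing R) • (TensorProduct.mk R (FractionRing R) N 1 x) =
      TensorProduct.mk R (FractionRing R) N 1 y

open TensorProduct

namespace StableUnder

variable {R : Type u} [CommRing R] {S : Subalgebra R (FractionRing R)}
  {N : Type u} [AddCommGroup N] [Module R N]

theorem add {x y : N} (hx : StableUnder R S N x) (hy : StableUnder R S N y) :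
    StableUnder R S N (x + y) := by
  intro s
  obtain ⟨a, ha⟩ := hx s
  obtain ⟨b, hb⟩ := hy s
  exact ⟨a + b, by rw [map_add, smul_add, ha, hb, map_add]⟩

theorem smul (c : R) {x : N} (hx : StableUnder R S N x) : StableUnder R S N (c • x) := by
  intro s
  obtain ⟨a, ha⟩ := hx s
  refine ⟨c • a, ?_⟩
  rw [map_smul, smul_comm, ha, map_smul]

theorem of_smul_eq {x y : N} {s : S} (hx : StableUnder R S N x)
    (hxy : (s : FractionRing R) • mk R (FractionRing R) N 1 x = mk R (FractionRing R) N 1 y) :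
    StableUnder R S N y := by
  intro t
  obtain ⟨z, hz⟩ := hx (t * s)
  refine ⟨z, ?_⟩
  rw [← hxy, smul_smul, ← hz, Subalgebra.coe_mul]

end StableUnder

theorem Subalgebra.exists_nonZeroDivisors_smul_eq_algebraMap {R : Type*} [CommRing R]
    (S : Subalgebra R (FractionRing R)) (s : S) :
    ∃ d ∈ nonZeroDivisors R, ∃ a : R, d • s = algebraMap R S a := by
  obtain ⟨⟨a, d⟩, hs⟩ := IsLocalization.mk'_surjective (nonZeroDivisors R) (s : FractionRing R)
  refine ⟨d, d.2, a, Subtype.ext ?_⟩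
  rw [Subalgebra.coe_smul, Subalgebra.coe_algebraMap, ← hs, Algebra.smul_def,
    IsLocalization.mk'_spec']

theorem stableUnder_apply {R : Type u} [CommRing R] {S : Subalgebra R (FractionRing R)}
    {N : Type u} [AddCommGroup N] [Module R N]
    {X : Type*} [AddCommGroup X] [Module R X] [Module S X] [IsScalarTower R S X]
    (f : X →ₗ[R] N) (v : X) : StableUnder R S N (f v) := by
  set K := FractionRing R
  set ι := mk R K N 1
  intro s
  obtain ⟨d, hd, a, hda⟩ := S.exists_nonZeroDivisors_smul_eq_algebraMap s
  have hd_unit : IsUnit (algebraMap R K d) :=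
    IsLocalization.map_units K (⟨d, hd⟩ : nonZeroDivisors R)
  have hdv : d • (s • v) = a • v := by rw [← smul_assoc, hda, algebraMap_smul]
  refine ⟨f (s • v), hd_unit.smul_left_cancel.mp ?_⟩
  calc algebraMap R K d • (s : K) • ι (f v) = ((d • s : S) : K) • ι (f v) := by
        rw [smul_smul, Subalgebra.coe_smul, Algebra.smul_def]
    _ = ι (f (a • v)) := by
        rw [hda, Subalgebra.coe_algebraMap, algebraMap_smul, map_smul, map_smul]
    _ = algebraMap R K d • ι (f (s • v)) := by
        rw [← hdv, map_smul, map_smul, algebraMap_smul]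

theorem largest_overring_submodule_general
    (R : Type u) [CommRing R]
    (S : Subalgebra R (FractionRing R))
    (N : Type u) [AddCommGroup N] [Module R N] :
    (∀ x y : N, StableUnder R S N x → StableUnder R S N y → StableUnder R S N (x + y)) ∧
    (∀ (c : R) (x : N), StableUnder R S N x → StableUnder R S N (c • x)) ∧
    (∀ (x y : N) (s : S), StableUnder R S N x →
      (s : FractionRing R) • (TensorProduct.mk R (FractionRing R) N 1 x) =
        TensorProduct.mk R (FractionRing R) N 1 y → StableUnder R S N y) ∧
    (∀ (X : Type u) [AddCommGroup X] [Module R X] [Module S X] [IsScalarTower R S X],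
      Module.Finite S X → TorsionFree S X →
      ∀ (f : X →ₗ[R] N) (v : X), StableUnder R S N (f v)) :=
  ⟨fun _ _ hx hy => hx.add hy, fun c _ hx => hx.smul c, fun _ _ _ hx hxy => hx.of_smul_eq hxy,
    fun _ _ _ _ _ _ _ f v => stableUnder_apply f v⟩

/-- Let `(R, m)` be a one-dimensional reduced complete Noetherian local
ring, `N` a finitely generated torsion-free `R`-module, and `S = R⁽¹⁾ = End_R(m)`, viewed
inside the total quotient ring `K` (the subalgebra of all `x` with `x·r = f(r)` for some
endomorphism `f` of `m`, `r` a fixed nonzerodivisor in `m`).  Then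
`N' = Hom_R(R⁽¹⁾, N) = {x ∈ N : S·x ⊆ N}` is the largest `R⁽¹⁾`-submodule of `N`: it is an
`S`-stable `R`-submodule, and for every finitely generated torsion-free `S`-module `X` and
every `R`-linear map `f : X → N` the image of `f` lies in `N'`. -/
theorem largest_overring_submodule
    (R : Type u) [CommRing R] [IsLocalRing R] [IsNoetherianRing R] [IsReduced R]
    (hdim : ringKrullDim R = 1) (hcomp : IsAdicComplete (maximalIdeal R) R)
    (r : R) (hr : r ∈ maximalIdeal R) (hr' : r ∈ nonZeroDivisors R)
    (S : Subalgebra R (FractionRing R))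
    (hS : ∀ x : FractionRing R, x ∈ S ↔ ∃ f : Module.End R (maximalIdeal R),
      x * algebraMap R (FractionRing R) r =
        algebraMap R (FractionRing R) ((f ⟨r, hr⟩ : maximalIdeal R) : R))
    (N : Type u) [AddCommGroup N] [Module R N]
    (hN : Module.Finite R N) (hNt : TorsionFree R N) :
    (∀ x y : N, StableUnder R S N x → StableUnder R S N y → StableUnder R S N (x + y)) ∧
    (∀ (c : R) (x : N), StableUnder R S N x → StableUnder R S N (c • x)) ∧
    (∀ (x y : N) (s : S), StableUnder R S N x →
      (s : FractionRing R) • (TensorProduct.mk R (FractionRing R) N 1 x) =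
        TensorProduct.mk R (FractionRing R) N 1 y → StableUnder R S N y) ∧
    (∀ (X : Type u) [AddCommGroup X] [Module R X] [Module S X] [IsScalarTower R S X],
      Module.Finite S X → TorsionFree S X →
      ∀ (f : X →ₗ[R] N) (v : X), StableUnder R S N (f v)) :=
  largest_overring_submodule_general R S N
end
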